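/- arXiv:2410.06156 — 4 statements merged into one kernel-verified Lean document; each statement's English description precedes it below -/
import Mathlib

section
/- Fix integers n, k, t, w with k ≥ t, n ≥ k, 1 ≤ w ≤ k, and positive integers k_1, …, k_w with k_1 + ⋯ + k_w = k and each k_i ≤ n. Let I_1, …, I_w be pairwise disjoint sets each of size n, and let 𝒜 = {F ⊆ I_1 ∪ ⋯ ∪ I_w : |F ∩ I_i| = k_i for every i}. Then 𝒜 is a k-uniform (r, t)-spread family for r = min_i (n/k_i). In particular, binom([n],k) (the case w = 1) is (n/k, t)-spread, and the family of graphs of functions from [k] to [n] (the case w = k, each k_i = 1) is (n, t)-spread. -/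
open Finset
open scoped Classical

variable {γ : Type*}

/-- `F(B) = {F \ B : F ∈ F, B ⊆ F}`. -/
def famRestrict [DecidableEq γ] (F : Finset (Finset γ)) (B : Finset γ) : Finset (Finset γ) :=
  (F.filter fun A => B ⊆ A).image fun A => A \ B

/-- `F[ℬ] = {F ∈ F : ∃ B ∈ ℬ, B ⊆ F}`. -/
def famAbove [DecidableEq γ] (F ℬ : Finset (Finset γ)) : Finset (Finset γ) :=
  F.filter fun A => ∃ B ∈ ℬ, B ⊆ A

/-- The shadow `∂_h F`. -/
def famShadow [DecidableEq γ] (F : Finset (Finset γ)) (h : ℕ) : Finset (Finset γ) :=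
  F.biUnion fun A => Finset.powersetCard h A

/-- The shadow `∂_{≤h} F`. -/
def famShadowLe [DecidableEq γ] (F : Finset (Finset γ)) (h : ℕ) : Finset (Finset γ) :=
  (Finset.range (h + 1)).biUnion fun j => famShadow F j

/-- `P` is a sunflower with `s` petals and core `K`: `P` consists of `s` sets, `K` is
the intersection of all members of `P`, and any two distinct members intersect in `K`. -/
def IsSunflower [DecidableEq γ] (P : Finset (Finset γ)) (s : ℕ) (K : Finset γ) : Prop :=
  P.card = s ∧ ∃ hP : P.Nonempty, K = P.inf' hP id ∧
    ∀ A ∈ P, ∀ B ∈ P, A ≠ B → A ∩ B = K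

/-- `F` contains no sunflower with `s` petals (with arbitrary core). -/
def SunflowerFree [DecidableEq γ] (F : Finset (Finset γ)) (s : ℕ) : Prop :=
  ∀ P ⊆ F, ∀ K : Finset γ, ¬ IsSunflower P s K

/-- `φ(s,t)`: the maximal size of a family of `t`-element sets with no sunflower
with `s` petals. -/
noncomputable def phi (s t : ℕ) : ℕ :=
  sSup {m : ℕ | ∃ F : Finset (Finset ℕ),
    (∀ A ∈ F, A.card = t) ∧ SunflowerFree F s ∧ F.card = m}

/-- `G` is `R`-spread: `|G(X)| ≤ R^{-|X|} |G|` for every `X`. -/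
def IsSpread [DecidableEq γ] (R : ℝ) (G : Finset (Finset γ)) : Prop :=
  ∀ X : Finset γ, ((famRestrict G X).card : ℝ) ≤ R ^ (-(X.card : ℤ)) * G.card

/-- `F` is `k`-uniform. -/
def IsUniform (F : Finset (Finset γ)) (k : ℕ) : Prop := ∀ A ∈ F, A.card = k

/-- `𝒜` is `(r,t)`-spread: `𝒜(T)` is `r`-spread for every `T ∈ ∂_{≤t} 𝒜`. -/
def IsRTSpread [DecidableEq γ] (𝒜 : Finset (Finset γ)) (r : ℝ) (t : ℕ) : Prop :=
  ∀ T ∈ famShadowLe 𝒜 t, IsSpread r (famRestrict 𝒜 T)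

/-- `F` is `τ`-homogeneous with respect to `𝒜`:
`|F(X)| ⬝ |𝒜| ≤ τ^{|X|} ⬝ |F| ⬝ |𝒜(X)|` for every `X`. -/
def IsHomog [DecidableEq γ] (τ : ℝ) (F 𝒜 : Finset (Finset γ)) : Prop :=
  ∀ X : Finset γ,
    ((famRestrict F X).card : ℝ) * 𝒜.card ≤ τ ^ X.card * F.card * (famRestrict 𝒜 X).card

/-!
The product family is invariant under every transposition of two points of the same block
`I i`. Fix `Y` and `a ∈ I i \ Y`. Swapping `a` with a point `y ∈ I i \ Y` sends the members
containing `insert a Y` injectively to pairs (member `A ⊇ Y`, point of `(A ∩ I i) \ Y`); this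
double count shows that adding `a` to `Y` multiplies the number of members containing it by at
most `k_i / n ≤ 1 / r`. Iterating over the points of `X`, `|𝒜(T ∪ X)| ≤ r^{-|X|} |𝒜(T)|`, and
`𝒜(T)(X) = 𝒜(T ∪ X)` when `X` is disjoint from `T` (otherwise it is empty).
-/

section Restrict

variable [DecidableEq γ]

lemma card_famRestrict (F : Finset (Finset γ)) (B : Finset γ) :
    #(famRestrict F B) = #(F.filter (B ⊆ ·)) := by
  refine card_image_of_injOn fun A hA A' hA' h => ?_
  simp only [coe_filter, Set.mem_ofPred_eq] at hA hA'
  rw [← sdiff_union_of_subset hA.2, ← sdiff_union_of_subset hA'.2]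
  exact congrArg (· ∪ B) h

lemma famRestrict_famRestrict_of_disjoint (F : Finset (Finset γ)) {T X : Finset γ}
    (h : Disjoint X T) : famRestrict (famRestrict F T) X = famRestrict F (T ∪ X) := by
  ext s
  simp only [famRestrict, mem_image, mem_filter]
  constructor
  · rintro ⟨_, ⟨⟨A, ⟨hA, hTA⟩, rfl⟩, hXA⟩, rfl⟩
    exact ⟨A, ⟨hA, union_subset hTA fun x hx => (mem_sdiff.1 (hXA hx)).1⟩, sdiff_sdiff_left.symm⟩
  · rintro ⟨A, ⟨hA, hTXA⟩, rfl⟩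
    refine ⟨A \ T, ⟨⟨A, ⟨hA, (union_subset_iff.1 hTXA).1⟩, rfl⟩, ?_⟩, sdiff_sdiff_left ..⟩
    exact subset_sdiff.2 ⟨(union_subset_iff.1 hTXA).2, h⟩

lemma famRestrict_famRestrict_of_not_disjoint (F : Finset (Finset γ)) {T X : Finset γ}
    (h : ¬ Disjoint X T) : famRestrict (famRestrict F T) X = ∅ := by
  rw [famRestrict, image_eq_empty, filter_eq_empty_iff]
  rintro _ hA hXA
  obtain ⟨A, -, rfl⟩ := mem_image.1 hA
  exact h (subset_sdiff.1 hXA).2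

variable {F : Finset (Finset γ)}

lemma card_filter_union_le_pow {c : ℝ} (hc : 0 ≤ c)
    (hstep : ∀ Y a, a ∉ Y → (#(F.filter (insert a Y ⊆ ·)) : ℝ) ≤ c * #(F.filter (Y ⊆ ·)))
    (Y X : Finset γ) (hXY : Disjoint X Y) :
    (#(F.filter (Y ∪ X ⊆ ·)) : ℝ) ≤ c ^ #X * #(F.filter (Y ⊆ ·)) := by
  induction X using Finset.induction_on with
  | empty => simp
  | @insert a X haX ih =>
    obtain ⟨haY, hXY⟩ := disjoint_insert_left.1 hXY
    rw [union_insert, card_insert_of_notMem haX, pow_succ', mul_assoc]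
    calc (#(F.filter (insert a (Y ∪ X) ⊆ ·)) : ℝ)
        ≤ c * #(F.filter (Y ∪ X ⊆ ·)) := hstep _ a (by simp [haY, haX])
      _ ≤ c * (c ^ #X * #(F.filter (Y ⊆ ·))) := mul_le_mul_of_nonneg_left (ih hXY) hc

lemma isSpread_famRestrict_of_card_filter_insert_le {r : ℝ} (hr : 0 ≤ r)
    (hstep : ∀ Y a, a ∉ Y → (#(F.filter (insert a Y ⊆ ·)) : ℝ) ≤ r⁻¹ * #(F.filter (Y ⊆ ·)))
    (T : Finset γ) : IsSpread r (famRestrict F T) := by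
  intro X
  rw [zpow_neg, ← inv_zpow, zpow_natCast]
  by_cases hXT : Disjoint X T
  · rw [famRestrict_famRestrict_of_disjoint F hXT, card_famRestrict, card_famRestrict]
    exact card_filter_union_le_pow (inv_nonneg.2 hr) hstep T X hXT
  · rw [famRestrict_famRestrict_of_not_disjoint F hXT, card_empty, Nat.cast_zero]
    positivity

end Restrict

section SwapInvariant

variable [DecidableEq γ]

lemma Equiv.swap_apply_mem_iff {x y z : γ} {s : Finset γ} (h : x ∈ s ↔ y ∈ s) :
    Equiv.swap x y z ∈ s ↔ z ∈ s := by
  rw [Equiv.swap_apply_def]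
  split_ifs with hzx hzy
  · rw [hzx, h]
  · rw [hzy, h]
  · rfl

variable {F : Finset (Finset γ)} {B Y : Finset γ} {a : γ}

lemma card_filter_insert_mul_card_sdiff_le
    (hswap : ∀ y ∈ B, ∀ A ∈ F, A.image (Equiv.swap a y) ∈ F) (haY : a ∉ Y) :
    #(F.filter (insert a Y ⊆ ·)) * #(B \ Y) ≤ ∑ A ∈ F.filter (Y ⊆ ·), #((A ∩ B) \ Y) := by
  rw [← card_product, ← card_sigma]
  refine card_le_card_of_injOn (fun p => ⟨p.1.image (Equiv.swap a p.2), p.2⟩) ?_ ?_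
  · rintro ⟨A, y⟩ hp
    simp only [coe_product, coe_filter, Set.mem_prod, Set.mem_ofPred_eq, mem_coe,
      mem_sdiff] at hp
    obtain ⟨⟨hA, haYA⟩, hyB, hyY⟩ := hp
    obtain ⟨haA, hYA⟩ := insert_subset_iff.1 haYA
    have hYimage : Y ⊆ A.image (Equiv.swap a y) := fun z hz =>
      mem_image.2 ⟨z, hYA hz, Equiv.swap_apply_of_ne_of_ne (ne_of_mem_of_not_mem hz haY)
        (ne_of_mem_of_not_mem hz hyY)⟩
    simp only [coe_sigma, Set.mem_sigma_iff, coe_filter, Set.mem_ofPred_eq, mem_coe, mem_sdiff,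
      mem_inter]
    exact ⟨⟨hswap y hyB A hA, hYimage⟩, ⟨mem_image.2 ⟨a, haA, Equiv.swap_apply_left a y⟩, hyB⟩, hyY⟩
  · rintro ⟨A, y⟩ - ⟨A', y'⟩ - h
    simp only [Sigma.mk.inj_iff, heq_eq_eq] at h
    obtain ⟨hAA', rfl⟩ := h
    rw [image_injective (Equiv.injective _) hAA']

theorem card_filter_insert_mul_card_le {m : ℕ} (hF : ∀ A ∈ F, #(A ∩ B) = m)
    (hswap : ∀ x ∈ B, ∀ y ∈ B, ∀ A ∈ F, A.image (Equiv.swap x y) ∈ F) (ha : a ∈ B)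
    (haY : a ∉ Y) :
    #(F.filter (insert a Y ⊆ ·)) * #B ≤ #(F.filter (Y ⊆ ·)) * m := by
  have hm : ∀ A ∈ F.filter (Y ⊆ ·), #((A ∩ B) \ Y) + #(B ∩ Y) = m := by
    intro A hA
    obtain ⟨hA, hYA⟩ := mem_filter.1 hA
    rw [← hF A hA, ← card_sdiff_add_card_inter (A ∩ B) Y, inter_assoc, inter_eq_right.2
      (inter_subset_right.trans hYA)]
  have hmono : #(F.filter (insert a Y ⊆ ·)) ≤ #(F.filter (Y ⊆ ·)) :=
    card_le_card (monotone_filter_right F fun _ _ h => (subset_insert a Y).trans h)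
  calc #(F.filter (insert a Y ⊆ ·)) * #B
      = #(F.filter (insert a Y ⊆ ·)) * #(B \ Y) + #(F.filter (insert a Y ⊆ ·)) * #(B ∩ Y) := by
        rw [← mul_add, card_sdiff_add_card_inter]
    _ ≤ ∑ A ∈ F.filter (Y ⊆ ·), #((A ∩ B) \ Y) + #(F.filter (Y ⊆ ·)) * #(B ∩ Y) :=
        add_le_add (card_filter_insert_mul_card_sdiff_le (hswap a ha) haY)
          (Nat.mul_le_mul_right _ hmono)
    _ = #(F.filter (Y ⊆ ·)) * m := by
        rw [← smul_eq_mul, ← sum_const, ← sum_add_distrib, sum_congr rfl hm, sum_const,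
          smul_eq_mul]

end SwapInvariant

section ProductFamily

open Function

variable [DecidableEq γ] {ι : Type*} [Fintype ι] {I : ι → Finset γ} {ks : ι → ℕ}

def productFamily (I : ι → Finset γ) (ks : ι → ℕ) : Finset (Finset γ) :=
  (univ.biUnion I).powerset.filter fun A => ∀ i, #(A ∩ I i) = ks i

@[simp]
lemma mem_productFamily {A : Finset γ} :
    A ∈ productFamily I ks ↔ A ⊆ univ.biUnion I ∧ ∀ i, #(A ∩ I i) = ks i := by
  rw [productFamily, mem_filter, mem_powerset]

lemma productFamily_isUniform (hI : Pairwise (Disjoint on I)) :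
    IsUniform (productFamily I ks) (∑ i, ks i) := by
  intro A hA
  obtain ⟨hAI, hAks⟩ := mem_productFamily.1 hA
  have hA_eq : A = univ.biUnion fun i => A ∩ I i := by
    rw [← inter_biUnion, inter_eq_left.2 hAI]
  rw [hA_eq, card_biUnion fun i _ j _ hij => (hI hij).mono inter_subset_right inter_subset_right]
  exact sum_congr rfl fun i _ => hAks i

lemma image_mem_productFamily {σ : Equiv.Perm γ} (hσ : ∀ i z, σ z ∈ I i ↔ z ∈ I i)
    {A : Finset γ} (hA : A ∈ productFamily I ks) : A.image σ ∈ productFamily I ks := by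
  obtain ⟨hAI, hAks⟩ := mem_productFamily.1 hA
  have hσI : ∀ i, (I i).image σ = I i := fun i => by
    ext z
    rw [mem_image]
    refine ⟨?_, fun hz => ⟨σ⁻¹ z, (hσ i _).1 (by simpa using hz), by simp⟩⟩
    rintro ⟨z, hz, rfl⟩
    exact (hσ i z).2 hz
  refine mem_productFamily.2 ⟨?_, fun i => ?_⟩
  · simp only [subset_iff, mem_image, mem_biUnion, mem_univ, true_and] at hAI ⊢
    rintro _ ⟨z, hz, rfl⟩
    obtain ⟨j, hj⟩ := hAI hz
    exact ⟨j, (hσ j z).2 hj⟩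
  · rw [← hσI i, ← image_inter _ _ σ.injective, card_image_of_injective _ σ.injective, hAks]

lemma swap_mem_productFamily (hI : Pairwise (Disjoint on I)) {i : ι} {x y : γ}
    (hx : x ∈ I i) (hy : y ∈ I i) {A : Finset γ} (hA : A ∈ productFamily I ks) :
    A.image (Equiv.swap x y) ∈ productFamily I ks := by
  refine image_mem_productFamily (fun j z => Equiv.swap_apply_mem_iff ?_) hA
  rcases eq_or_ne i j with rfl | hij
  · exact iff_of_true hx hy
  · exact iff_of_false (disjoint_left.1 (hI hij) hx) (disjoint_left.1 (hI hij) hy)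

lemma productFamily_card_filter_insert_le {n : ℕ} (hI : Pairwise (Disjoint on I))
    (hcard : ∀ i, #(I i) = n) (hks : ∀ i, 0 < ks i) {Y : Finset γ} {a : γ} (haY : a ∉ Y) :
    (#((productFamily I ks).filter (insert a Y ⊆ ·)) : ℝ)
      ≤ (⨅ i, (n : ℝ) / ks i)⁻¹ * #((productFamily I ks).filter (Y ⊆ ·)) := by
  set F := productFamily I ks
  set r := ⨅ i, (n : ℝ) / ks i
  by_cases ha : ∃ i, a ∈ I i
  · obtain ⟨i, hai⟩ := ha
    have : Nonempty ι := ⟨i⟩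
    have hn : 0 < n := hcard i ▸ card_pos.2 ⟨a, hai⟩
    have hr : 0 < r := by
      obtain ⟨j, hj⟩ := exists_eq_ciInf_of_finite (f := fun i => (n : ℝ) / ks i)
      have := hks j
      exact lt_of_lt_of_eq (by positivity) hj
    have hri : r ≤ n / ks i := ciInf_le (Set.finite_range _).bddBelow i
    have hcount : #(F.filter (insert a Y ⊆ ·)) * n ≤ #(F.filter (Y ⊆ ·)) * ks i :=
      hcard i ▸ card_filter_insert_mul_card_le (fun A hA => (mem_productFamily.1 hA).2 i)
        (fun _ hx _ hy _ hA => swap_mem_productFamily hI hx hy hA) hai haY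
    calc (#(F.filter (insert a Y ⊆ ·)) : ℝ)
        = #(F.filter (insert a Y ⊆ ·)) * n / n := by field_simp
      _ ≤ #(F.filter (Y ⊆ ·)) * ks i / n := by
          gcongr ?_ / _
          exact_mod_cast hcount
      _ = ((n : ℝ) / ks i)⁻¹ * #(F.filter (Y ⊆ ·)) := by rw [inv_div]; ring
      _ ≤ r⁻¹ * #(F.filter (Y ⊆ ·)) := by gcongr
  · have hempty : F.filter (insert a Y ⊆ ·) = ∅ := filter_eq_empty_iff.2 fun A hA haYA =>
      ha <| by simpa using (mem_productFamily.1 hA).1 (haYA (mem_insert_self a Y))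
    have hr : 0 ≤ r := Real.iInf_nonneg fun i => by positivity
    rw [hempty, card_empty, Nat.cast_zero]
    positivity

end ProductFamily

theorem product_family_spread_general {α : Type*} [DecidableEq α] (n k t w : ℕ)
    (ks : Fin w → ℕ) (hkspos : ∀ i, 0 < ks i)
    (hsum : ∑ i, ks i = k)
    (I : Fin w → Finset α) (hcard : ∀ i, (I i).card = n)
    (hdisj : ∀ i j, i ≠ j → Disjoint (I i) (I j))
    (𝒜 : Finset (Finset α))
    (h𝒜 : 𝒜 = (Finset.univ.biUnion I).powerset.filter fun A => ∀ i, (A ∩ I i).card = ks i)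
    (r : ℝ) (hr : r = sInf {x : ℝ | ∃ i, x = (n : ℝ) / (ks i : ℝ)}) :
    IsUniform 𝒜 k ∧ IsRTSpread 𝒜 r t := by
  have h𝒜' : 𝒜 = productFamily I ks := by
    rw [h𝒜, productFamily]
    congr
  have hr' : r = ⨅ i, (n : ℝ) / ks i := by
    rw [hr, iInf]
    congr 1
    ext
    simp [eq_comm]
  subst h𝒜' hr'
  refine ⟨hsum ▸ productFamily_isUniform hdisj, fun T _ => ?_⟩
  exact isSpread_famRestrict_of_card_filter_insert_le (Real.iInf_nonneg fun i => by positivity)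
    (fun Y a haY => productFamily_card_filter_insert_le hdisj hcard hkspos haY) T

/-- Proposition 4.8 (product families are `(r,t)`-spread). -/
theorem product_family_spread {α : Type*} [DecidableEq α] (n k t w : ℕ)
    (hkt : t ≤ k) (hnk : k ≤ n) (hw1 : 1 ≤ w) (hwk : w ≤ k)
    (ks : Fin w → ℕ) (hkspos : ∀ i, 0 < ks i) (hksn : ∀ i, ks i ≤ n)
    (hsum : ∑ i, ks i = k)
    (I : Fin w → Finset α) (hcard : ∀ i, (I i).card = n)
    (hdisj : ∀ i j, i ≠ j → Disjoint (I i) (I j))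
    (𝒜 : Finset (Finset α))
    (h𝒜 : 𝒜 = (Finset.univ.biUnion I).powerset.filter fun A => ∀ i, (A ∩ I i).card = ks i)
    (r : ℝ) (hr : r = sInf {x : ℝ | ∃ i, x = (n : ℝ) / (ks i : ℝ)}) :
    IsUniform 𝒜 k ∧ IsRTSpread 𝒜 r t :=
  product_family_spread_general n k t w ks hkspos hsum I hcard hdisj 𝒜 h𝒜 r hr
end

section
/- Let 𝒜 be a finite k-uniform family, S a finite set, and t ≥ 1 an integer, and suppose the following regularity identity holds: for every family G ⊆ 𝒜(S) and every h ≤ t−1, the ratio |G|/|𝒜(S)| equals the average over H ∈ ∂_h(𝒜(S)) of |G(H)|/|𝒜(S ∪ H)|. Let F ⊆ 𝒜(S) be τ-homogeneous with respect to 𝒜(S), let h be a positive integer with h ≤ t−1 and h < k, let α, ρ ∈ (0,1), and suppose τ ≤ (1 − α·ρ)^{−1/h}. Then for all but at most α · |∂_h(𝒜(S))| sets H ∈ ∂_h(𝒜(S)), the family F(H) is τ̂-homogeneous with respect to 𝒜(S ∪ H) for τ̂ = τ/(1−ρ), and |F(H)|/|𝒜(S ∪ H)| ≥ (1−ρ)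 · τ^h · |F|/|𝒜(S)|. -/
open Finset
open scoped Classical

variable {γ : Type*}

section AuxLemmas

variable [DecidableEq γ]

lemma mem_famRestrict' {F : Finset (Finset γ)} {B C : Finset γ} :
    C ∈ famRestrict F B ↔ ∃ A, A ∈ F ∧ B ⊆ A ∧ A \ B = C := by
  simp only [famRestrict, mem_image, mem_filter]
  tauto

lemma famRestrict_empty_left (B : Finset γ) : famRestrict (∅ : Finset (Finset γ)) B = ∅ := by
  simp [famRestrict]

lemma famRestrict_empty_right (F : Finset (Finset γ)) : famRestrict F ∅ = F := by
  ext C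
  simp [mem_famRestrict']

lemma sdiff_sdiff_union' (A S H : Finset γ) : (A \ S) \ H = A \ (S ∪ H) := by
  ext x
  simp only [Finset.mem_sdiff, Finset.mem_union]
  tauto

lemma famRestrict_famRestrict {F : Finset (Finset γ)} {S H : Finset γ}
    (hd : Disjoint H S) :
    famRestrict (famRestrict F S) H = famRestrict F (S ∪ H) := by
  ext C
  simp only [mem_famRestrict']
  constructor
  · rintro ⟨B, ⟨A, hA, hSA, rfl⟩, hHB, rfl⟩
    have hHA : H ⊆ A := (Finset.subset_sdiff.mp hHB).1
    exact ⟨A, hA, Finset.union_subset hSA hHA, (sdiff_sdiff_union' A S H).symm ▸ rfl⟩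
  · rintro ⟨A, hA, hSHA, rfl⟩
    refine ⟨A \ S, ⟨A, hA, (Finset.union_subset_iff.mp hSHA).1, rfl⟩, ?_, ?_⟩
    · exact Finset.subset_sdiff.mpr ⟨(Finset.union_subset_iff.mp hSHA).2, hd⟩
    · exact sdiff_sdiff_union' A S H

lemma mem_famShadow' {F : Finset (Finset γ)} {h : ℕ} {H : Finset γ} :
    H ∈ famShadow F h ↔ ∃ A, A ∈ F ∧ H ⊆ A ∧ H.card = h := by
  simp only [famShadow, mem_biUnion, Finset.mem_powersetCard]

lemma card_famRestrict_pos {F : Finset (Finset γ)} {B A : Finset γ}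
    (hA : A ∈ F) (hBA : B ⊆ A) : 0 < (famRestrict F B).card :=
  Finset.card_pos.mpr ⟨A \ B, mem_famRestrict'.mpr ⟨A, hA, hBA, rfl⟩⟩

end AuxLemmas

set_option maxHeartbeats 2000000

/-- Proposition 5.6 (most restrictions of a homogeneous family are
homogeneous). -/
theorem most_restrictions_homogeneous {α : Type*} [DecidableEq α]
    (k : ℕ) (𝒜 : Finset (Finset α)) (hAunif : IsUniform 𝒜 k)
    (S : Finset α) (t : ℕ) (ht : 1 ≤ t)
    (hreg : ∀ G ⊆ famRestrict 𝒜 S, ∀ h ≤ t - 1,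
      (G.card : ℝ) / ((famRestrict 𝒜 S).card : ℝ) =
        (∑ H ∈ famShadow (famRestrict 𝒜 S) h,
            ((famRestrict G H).card : ℝ) / ((famRestrict 𝒜 (S ∪ H)).card : ℝ))
          / ((famShadow (famRestrict 𝒜 S) h).card : ℝ))
    (τ : ℝ) (F : Finset (Finset α)) (hFA : F ⊆ famRestrict 𝒜 S)
    (hhom : IsHomog τ F (famRestrict 𝒜 S))
    (h : ℕ) (hh0 : 0 < h) (hht : h ≤ t - 1) (hhk : h < k)
    (a ρ : ℝ) (ha : a ∈ Set.Ioo (0:ℝ) 1) (hρ : ρ ∈ Set.Ioo (0:ℝ) 1)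
    (hτ : τ ≤ (1 - a * ρ) ^ (-(1 / (h:ℝ)))) :
    (((famShadow (famRestrict 𝒜 S) h).filter fun H =>
        ¬ (IsHomog (τ / (1 - ρ)) (famRestrict F H) (famRestrict 𝒜 (S ∪ H)) ∧
            (1 - ρ) * τ ^ h * (F.card : ℝ) / ((famRestrict 𝒜 S).card : ℝ) ≤
              ((famRestrict F H).card : ℝ) / ((famRestrict 𝒜 (S ∪ H)).card : ℝ))).card : ℝ)
      ≤ a * ((famShadow (famRestrict 𝒜 S) h).card : ℝ) := by
  obtain ⟨ha0, ha1⟩ := ha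
  obtain ⟨hρ0, hρ1⟩ := hρ
  have hρp : (0:ℝ) < 1 - ρ := by linarith
  set 𝒜' := famRestrict 𝒜 S with h𝒜'
  set Sh := famShadow 𝒜' h with hSh
  by_cases hShadow : Sh = ∅
  · rw [hShadow]
    simp
  have hShNe : Sh.Nonempty := Finset.nonempty_iff_ne_empty.mpr hShadow
  by_cases hFe : F = ∅
  · subst hFe
    have hfil : (Sh.filter fun H =>
        ¬ (IsHomog (τ / (1 - ρ)) (famRestrict ∅ H) (famRestrict 𝒜 (S ∪ H)) ∧
            (1 - ρ) * τ ^ h * (((∅:Finset (Finset α)).card) : ℝ) / ((𝒜'.card) : ℝ) ≤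
              ((famRestrict ∅ H).card : ℝ) / ((famRestrict 𝒜 (S ∪ H)).card : ℝ))) = ∅ := by
      refine Finset.filter_eq_empty_iff.mpr ?_
      intro H _
      rw [not_not]
      constructor
      · intro X
        simp [famRestrict_empty_left]
      · simp [famRestrict_empty_left]
    rw [hfil]
    have : (0:ℝ) ≤ a * (Sh.card : ℝ) := by positivity
    simpa using this
  -- main case
  have hFne : F.Nonempty := Finset.nonempty_iff_ne_empty.mpr hFe
  have hA'ne : 𝒜'.Nonempty := hFne.mono hFA
  have hA0 : (0:ℝ) < (𝒜'.card : ℝ) := by exact_mod_cast Finset.card_pos.mpr hA'ne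
  have hf : (0:ℝ) < (F.card : ℝ) := by exact_mod_cast Finset.card_pos.mpr hFne
  -- all members of 𝒜' have card k - S.card
  have hcard𝒜' : ∀ B ∈ 𝒜', B.card = k - S.card := by
    intro B hB
    obtain ⟨A, hA, hSA, rfl⟩ := mem_famRestrict'.mp hB
    rw [Finset.card_sdiff_of_subset hSA, hAunif A hA]
  -- facts about shadow members
  have hShFacts : ∀ H ∈ Sh, Disjoint H S ∧ H.card = h ∧
      (0:ℝ) < ((famRestrict 𝒜 (S ∪ H)).card : ℝ) := by
    intro H hH
    obtain ⟨B, hB, hHB, hc⟩ := mem_famShadow'.mp hH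
    obtain ⟨A, hA, hSA, rfl⟩ := mem_famRestrict'.mp hB
    have hd : Disjoint H S := (Finset.subset_sdiff.mp hHB).2
    have hHA : H ⊆ A := (Finset.subset_sdiff.mp hHB).1
    have : 0 < (famRestrict 𝒜 (S ∪ H)).card :=
      card_famRestrict_pos hA (Finset.union_subset hSA hHA)
    exact ⟨hd, hc, by exact_mod_cast this⟩
  -- τ > 0
  have hτ0 : (0:ℝ) < τ := by
    obtain ⟨H₀, hH₀⟩ := hShNe
    obtain ⟨B₀, hB₀, hH₀B₀, hc₀⟩ := mem_famShadow'.mp hH₀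
    obtain ⟨B, hBF⟩ := hFne
    have hB𝒜' : B ∈ 𝒜' := hFA hBF
    have hBcard : 0 < B.card := by
      rw [hcard𝒜' B hB𝒜', ← hcard𝒜' B₀ hB₀]
      calc 0 < h := hh0
        _ = H₀.card := hc₀.symm
        _ ≤ B₀.card := Finset.card_le_card hH₀B₀
    obtain ⟨x, hx⟩ := Finset.card_pos.mp hBcard
    have h1 : (1:ℝ) ≤ ((famRestrict F {x}).card : ℝ) := by
      exact_mod_cast card_famRestrict_pos hBF (Finset.singleton_subset_iff.mpr hx)
    have h2 : (0:ℝ) < ((famRestrict 𝒜' {x}).card : ℝ) := by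
      exact_mod_cast card_famRestrict_pos hB𝒜' (Finset.singleton_subset_iff.mpr hx)
    have h3 := hhom {x}
    rw [Finset.card_singleton, pow_one] at h3
    by_contra hc
    push_neg at hc
    have hneg : τ * (F.card : ℝ) * ((famRestrict 𝒜' {x}).card : ℝ) ≤ 0 := by
      nlinarith [mul_pos hf h2]
    have hpos' : (0:ℝ) < ((famRestrict F {x}).card : ℝ) * ((𝒜'.card) : ℝ) :=
      mul_pos (by linarith) hA0
    linarith
  -- τ^h * (1 - a*ρ) ≤ 1
  have hbase : (0:ℝ) < 1 - a * ρ := by nlinarith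
  have hτh : τ ^ h * (1 - a * ρ) ≤ 1 := by
    have h1 : τ ^ h ≤ ((1 - a * ρ) ^ (-(1 / (h:ℝ)))) ^ h :=
      pow_le_pow_left₀ hτ0.le hτ h
    have h2 : ((1 - a * ρ) ^ (-(1 / (h:ℝ)))) ^ h = (1 - a * ρ)⁻¹ := by
      rw [← Real.rpow_natCast ((1 - a * ρ) ^ (-(1 / (h:ℝ)))) h, ← Real.rpow_mul hbase.le]
      rw [show (-(1 / (h:ℝ))) * (h:ℕ) = -1 by
        field_simp]
      exact Real.rpow_neg_one _
    rw [h2] at h1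
    rw [← le_div_iff₀ hbase] at *
    rw [div_eq_inv_mul, mul_one]
    exact h1
  have hτhp : (0:ℝ) < τ ^ h := pow_pos hτ0 h
  -- per-H term bound from homogeneity
  have hterm : ∀ H ∈ Sh,
      ((famRestrict F H).card : ℝ) / ((famRestrict 𝒜 (S ∪ H)).card : ℝ) ≤
        τ ^ h * ((F.card : ℝ) / (𝒜'.card : ℝ)) := by
    intro H hH
    obtain ⟨hd, hc, hA1⟩ := hShFacts H hH
    have hhomH := hhom H
    rw [hc, famRestrict_famRestrict hd] at hhomH
    rw [← mul_div_assoc, div_le_div_iff₀ hA1 hA0]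
    exact hhomH
  -- Claim A : density implies homogeneity
  have claimA : ∀ H ∈ Sh,
      ((1 - ρ) * τ ^ h * (F.card : ℝ) / ((𝒜'.card) : ℝ) ≤
        ((famRestrict F H).card : ℝ) / ((famRestrict 𝒜 (S ∪ H)).card : ℝ)) →
      IsHomog (τ / (1 - ρ)) (famRestrict F H) (famRestrict 𝒜 (S ∪ H)) := by
    intro H hH hdens X
    obtain ⟨hd, hc, hA1⟩ := hShFacts H hH
    by_cases hXd : Disjoint X (S ∪ H)
    · by_cases hX0 : X = ∅
      · subst hX0
        rw [famRestrict_empty_right, famRestrict_empty_right]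
        simp
      · have hXS : Disjoint X S := (Finset.disjoint_union_right.mp hXd).1
        have hXH : Disjoint X H := (Finset.disjoint_union_right.mp hXd).2
        rw [famRestrict_famRestrict hXH, famRestrict_famRestrict hXd]
        have key := hhom (H ∪ X)
        rw [famRestrict_famRestrict (Finset.disjoint_union_left.mpr ⟨hd, hXS⟩),
          Finset.card_union_of_disjoint hXH.symm, hc, ← Finset.union_assoc] at key
        rw [pow_add] at key
        -- clear denominators in the density hypothesis
        rw [div_le_div_iff₀ hA0 hA1] at hdens
        have hx1 : 1 ≤ X.card := Finset.card_pos.mpr (Finset.nonempty_iff_ne_empty.mpr hX0)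
        set f := (F.card : ℝ)
        set A0 := (𝒜'.card : ℝ)
        set A1 := ((famRestrict 𝒜 (S ∪ H)).card : ℝ)
        set A2 := ((famRestrict 𝒜 (S ∪ H ∪ X)).card : ℝ)
        set FH := ((famRestrict F H).card : ℝ)
        set FHX := ((famRestrict F (H ∪ X)).card : ℝ)
        have hA2 : (0:ℝ) ≤ A2 := Nat.cast_nonneg _
        have hFH : (0:ℝ) ≤ FH := Nat.cast_nonneg _
        have hFHX : (0:ℝ) ≤ FHX := Nat.cast_nonneg _
        have hτx : (0:ℝ) < τ ^ X.card := pow_pos hτ0 _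
        have hu : (1 - ρ) ^ X.card ≤ 1 - ρ := by
          calc (1 - ρ) ^ X.card ≤ (1 - ρ) ^ 1 :=
            pow_le_pow_of_le_one hρp.le (by linarith) hx1
            _ = 1 - ρ := pow_one _
        have c2 : FHX * ((1 - ρ) * A1) ≤ τ ^ X.card * A2 * FH := by
          have hpos : (0:ℝ) < τ ^ h * f * A0 := by positivity
          have c1 : (FHX * A0) * ((1 - ρ) * τ ^ h * f * A1) ≤
              (τ ^ h * τ ^ X.card * f * A2) * (FH * A0) := by
            refine mul_le_mul key hdens ?_ ?_
            · positivity
            · positivity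
          refine le_of_mul_le_mul_right ?_ hpos
          nlinarith [c1]
        rw [div_pow]
        calc FHX * A1 ≤ FHX * A1 * ((1 - ρ) ^ X.card / (1 - ρ) ^ X.card) := by
              rw [div_self (by positivity), mul_one]
          _ = (FHX * A1 * (1 - ρ) ^ X.card) / (1 - ρ) ^ X.card := by ring
          _ ≤ (τ ^ X.card * FH * A2) / (1 - ρ) ^ X.card := by
              apply div_le_div_of_nonneg_right ?_ (by positivity)
              calc FHX * A1 * (1 - ρ) ^ X.card ≤ FHX * A1 * (1 - ρ) :=
                    mul_le_mul_of_nonneg_left hu (mul_nonneg hFHX hA1.le)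
                _ ≤ τ ^ X.card * FH * A2 := by nlinarith [c2]
          _ = τ ^ X.card / (1 - ρ) ^ X.card * FH * A2 := by ring
    · -- X meets S ∪ H : both restricted families are empty on X
      have hemp : famRestrict (famRestrict F H) X = ∅ := by
        rw [Finset.eq_empty_iff_forall_notMem]
        intro C hC
        obtain ⟨B, hB, hXB, rfl⟩ := mem_famRestrict'.mp hC
        obtain ⟨B', hB'F, hHB', rfl⟩ := mem_famRestrict'.mp hB
        obtain ⟨A, hA, hSA, rfl⟩ := mem_famRestrict'.mp (hFA hB'F)
        apply hXd
        have hX : X ⊆ A \ (S ∪ H) := by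
          rw [← sdiff_sdiff_union']
          exact hXB
        exact (Finset.subset_sdiff.mp hX).2
      rw [hemp]
      simp only [Finset.card_empty, Nat.cast_zero, zero_mul]
      positivity
  -- the bad set for density
  set P : Finset α → Prop := fun H =>
    (1 - ρ) * τ ^ h * (F.card : ℝ) / ((𝒜'.card) : ℝ) ≤
      ((famRestrict F H).card : ℝ) / ((famRestrict 𝒜 (S ∪ H)).card : ℝ) with hP
  have hsubset : (Sh.filter fun H =>
      ¬ (IsHomog (τ / (1 - ρ)) (famRestrict F H) (famRestrict 𝒜 (S ∪ H)) ∧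
          (1 - ρ) * τ ^ h * (F.card : ℝ) / ((𝒜'.card) : ℝ) ≤
            ((famRestrict F H).card : ℝ) / ((famRestrict 𝒜 (S ∪ H)).card : ℝ)))
      ⊆ Sh.filter fun H => ¬ P H := by
    intro H hH
    rw [Finset.mem_filter] at *
    refine ⟨hH.1, ?_⟩
    intro hPH
    exact hH.2 ⟨claimA H hH.1 hPH, hPH⟩
  -- counting
  have hN : (0:ℝ) < (Sh.card : ℝ) := by exact_mod_cast Finset.card_pos.mpr hShNe
  set d : ℝ := (F.card : ℝ) / (𝒜'.card : ℝ) with hd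
  have hd0 : 0 < d := by positivity
  have hsum : ∑ H ∈ Sh, ((famRestrict F H).card : ℝ) / ((famRestrict 𝒜 (S ∪ H)).card : ℝ)
      = d * (Sh.card : ℝ) := by
    have := hreg F hFA h hht
    rw [← hd] at this
    field_simp at this
    linarith [this]
  set cB : ℝ := ((Sh.filter fun H => ¬ P H).card : ℝ) with hcB
  set cG : ℝ := ((Sh.filter fun H => P H).card : ℝ) with hcG
  have hsplit : cG + cB = (Sh.card : ℝ) := by
    rw [hcG, hcB]
    exact_mod_cast Finset.card_filter_add_card_filter_not (p := P) (s := Sh)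
  have hsumB : ∑ H ∈ Sh.filter fun H => ¬ P H,
      ((famRestrict F H).card : ℝ) / ((famRestrict 𝒜 (S ∪ H)).card : ℝ)
      ≤ cB * ((1 - ρ) * τ ^ h * d) := by
    rw [hcB, ← nsmul_eq_mul]
    refine Finset.sum_le_card_nsmul _ _ _ ?_
    intro H hH
    rw [Finset.mem_filter] at hH
    have : ¬ P H := hH.2
    simp only [hP] at this
    push_neg at this
    calc ((famRestrict F H).card : ℝ) / ((famRestrict 𝒜 (S ∪ H)).card : ℝ)
        ≤ (1 - ρ) * τ ^ h * (F.card : ℝ) / ((𝒜'.card) : ℝ) := this.le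
      _ = (1 - ρ) * τ ^ h * d := by rw [hd]; ring
  have hsumG : ∑ H ∈ Sh.filter fun H => P H,
      ((famRestrict F H).card : ℝ) / ((famRestrict 𝒜 (S ∪ H)).card : ℝ)
      ≤ cG * (τ ^ h * d) := by
    rw [hcG, ← nsmul_eq_mul]
    refine Finset.sum_le_card_nsmul _ _ _ ?_
    intro H hH
    rw [Finset.mem_filter] at hH
    exact hterm H hH.1
  have htotal : d * (Sh.card : ℝ) ≤ cG * (τ ^ h * d) + cB * ((1 - ρ) * τ ^ h * d) := by
    rw [← hsum, ← Finset.sum_filter_add_sum_filter_not Sh P]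
    exact add_le_add hsumG hsumB
  -- algebra
  have e2 : (Sh.card : ℝ) ≤ τ ^ h * ((Sh.card : ℝ) - ρ * cB) := by
    have heq : cG * (τ ^ h * d) + cB * ((1 - ρ) * τ ^ h * d)
        = d * (τ ^ h * ((Sh.card : ℝ) - ρ * cB)) := by
      rw [← hsplit]; ring
    have h1 : d * (Sh.card : ℝ) ≤ d * (τ ^ h * ((Sh.card : ℝ) - ρ * cB)) := by
      rw [← heq]; exact htotal
    exact le_of_mul_le_mul_left h1 hd0
  have hcB0 : (0:ℝ) ≤ cB := by rw [hcB]; exact Nat.cast_nonneg _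
  have e3 : (0:ℝ) < (Sh.card : ℝ) - ρ * cB := by
    by_contra hcon
    push_neg at hcon
    nlinarith
  have hfinal : cB ≤ a * (Sh.card : ℝ) := by
    have h1 : (Sh.card : ℝ) * (1 - a * ρ) ≤ τ ^ h * ((Sh.card : ℝ) - ρ * cB) * (1 - a * ρ) :=
      mul_le_mul_of_nonneg_right e2 hbase.le
    have h2 : τ ^ h * (1 - a * ρ) * ((Sh.card : ℝ) - ρ * cB) ≤ 1 * ((Sh.card : ℝ) - ρ * cB) :=
      mul_le_mul_of_nonneg_right hτh e3.le
    nlinarith [h1, h2, hρ0]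
  refine le_trans ?_ hfinal
  rw [hcB]
  exact_mod_cast Finset.card_le_card hsubset
end

section
/- Let 𝒜 be a finite k-uniform r-spread family, let τ ≥ 1 be a real, and let G ⊆ 𝒜 be a nonempty τ-homogeneous family with respect to 𝒜. Let X be a finite set with |X| < r/τ. Then the family G(∅, X) = {G ∈ G : G ∩ X = ∅} is nonempty and τ′-homogeneous with respect to 𝒜, where τ′ = τ/(1 − |X|·τ/r); moreover |G(∅, X)| ≥ (1 − |X|·τ/r) · |G|. -/
open Finset
open scoped Classical

variable {γ : Type*}

lemma famRestrict_empty' [DecidableEq γ] (F : Finset (Finset γ)) : famRestrict F ∅ = F := by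
  simp [famRestrict]

lemma famRestrict_mono' [DecidableEq γ] {F G : Finset (Finset γ)} (h : F ⊆ G) (B : Finset γ) :
    famRestrict F B ⊆ famRestrict G B :=
  Finset.image_subset_image (Finset.filter_subset_filter _ h)

lemma card_filter_mem_eq' [DecidableEq γ] (F : Finset (Finset γ)) (x : γ) :
    (F.filter fun A => x ∈ A).card = (famRestrict F {x}).card := by
  rw [famRestrict, Finset.card_image_of_injOn]
  · congr 1; ext A; simp [Finset.singleton_subset_iff]
  · intro A hA B hB hAB
    simp only [Finset.coe_filter, Set.mem_setOf_eq, Finset.singleton_subset_iff] at hA hB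
    have hAB' : A \ {x} = B \ {x} := hAB
    rw [Finset.sdiff_singleton_eq_erase, Finset.sdiff_singleton_eq_erase] at hAB'
    rw [← Finset.insert_erase hA.2, ← Finset.insert_erase hB.2, hAB']

/-- Claim 5.8 (homogeneity after removing elements from the support). -/
theorem homogeneous_removing_intersections {α : Type*} [DecidableEq α]
    (k : ℕ) (r τ : ℝ) (hτ : 1 ≤ τ)
    (𝒜 : Finset (Finset α)) (hAunif : IsUniform 𝒜 k) (hAspread : IsSpread r 𝒜)
    (G : Finset (Finset α)) (hGA : G ⊆ 𝒜) (hGne : G.Nonempty) (hhom : IsHomog τ G 𝒜)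
    (X : Finset α) (hX : (X.card : ℝ) < r / τ) :
    (G.filter fun A => A ∩ X = ∅).Nonempty ∧
    IsHomog (τ / (1 - (X.card : ℝ) * τ / r)) (G.filter fun A => A ∩ X = ∅) 𝒜 ∧
    (1 - (X.card : ℝ) * τ / r) * (G.card : ℝ) ≤
      ((G.filter fun A => A ∩ X = ∅).card : ℝ) := by
  classical
  have hτ0 : (0:ℝ) < τ := lt_of_lt_of_le one_pos hτ
  have hrτ : (0:ℝ) < r / τ := lt_of_le_of_lt (Nat.cast_nonneg _) hX
  have hr : (0:ℝ) < r := by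
    rcases div_pos_iff.mp hrτ with ⟨h, _⟩ | ⟨_, h⟩
    · exact h
    · linarith
  set c : ℝ := (X.card : ℝ) * τ / r with hcdef
  have hc0 : 0 ≤ c := by positivity
  have hc1 : c < 1 := by
    rw [hcdef, div_lt_one hr]
    exact (lt_div_iff₀ hτ0).mp hX
  have h1c : (0:ℝ) < 1 - c := by linarith
  have hAne : 𝒜.Nonempty := hGne.mono hGA
  have hA0 : (0:ℝ) < 𝒜.card := by exact_mod_cast Finset.card_pos.mpr hAne
  have hG0 : (0:ℝ) < G.card := by exact_mod_cast Finset.card_pos.mpr hGne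
  -- singleton bound
  have hbx : ∀ x : α, ((famRestrict G {x}).card : ℝ) ≤ τ * G.card / r := by
    intro x
    have h1 := hhom {x}
    have h2 := hAspread {x}
    simp only [Finset.card_singleton, pow_one] at h1 h2
    have h2' : ((famRestrict 𝒜 {x}).card : ℝ) ≤ r⁻¹ * 𝒜.card := by
      rwa [show (-(1:ℕ):ℤ) = -1 by norm_num, zpow_neg_one] at h2
    have h3 : ((famRestrict G {x}).card : ℝ) * 𝒜.card ≤ (τ * G.card / r) * 𝒜.card := by
      calc ((famRestrict G {x}).card : ℝ) * 𝒜.card ≤ τ * G.card * (famRestrict 𝒜 {x}).card :=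
            h1
        _ ≤ τ * G.card * (r⁻¹ * 𝒜.card) := by
            apply mul_le_mul_of_nonneg_left h2' (by positivity)
        _ = (τ * G.card / r) * 𝒜.card := by field_simp
    exact le_of_mul_le_mul_right h3 hA0
  -- bad set bound
  set Bad := G.filter (fun A => ¬ (A ∩ X = ∅)) with hBaddef
  have hBadsub : Bad ⊆ X.biUnion (fun x => G.filter fun A => x ∈ A) := by
    intro A hA
    simp only [hBaddef, Finset.mem_filter] at hA
    obtain ⟨hAG, hne⟩ := hA
    obtain ⟨x, hx⟩ := Finset.nonempty_iff_ne_empty.mpr hne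
    rw [Finset.mem_inter] at hx
    simp only [Finset.mem_biUnion, Finset.mem_filter]
    exact ⟨x, hx.2, hAG, hx.1⟩
  have hBad : (Bad.card : ℝ) ≤ X.card * (τ * G.card / r) := by
    calc (Bad.card : ℝ) ≤ ((X.biUnion fun x => G.filter fun A => x ∈ A).card : ℝ) := by
          exact_mod_cast Finset.card_le_card hBadsub
      _ ≤ ∑ x ∈ X, ((G.filter fun A => x ∈ A).card : ℝ) := by
          exact_mod_cast Finset.card_biUnion_le
      _ ≤ ∑ x ∈ X, τ * G.card / r := by
          refine Finset.sum_le_sum fun x _ => ?_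
          rw [card_filter_mem_eq']
          exact hbx x
      _ = X.card * (τ * G.card / r) := by rw [Finset.sum_const, nsmul_eq_mul]
  have hsplit : ((G.filter fun A => A ∩ X = ∅).card : ℝ) + Bad.card = G.card := by
    exact_mod_cast Finset.card_filter_add_card_filter_not (p := fun A => A ∩ X = ∅)
  have key : (1 - c) * (G.card : ℝ) ≤ ((G.filter fun A => A ∩ X = ∅).card : ℝ) := by
    have hcg : c * (G.card : ℝ) = X.card * (τ * G.card / r) := by
      rw [hcdef]; field_simp
    linarith
  have hne : (G.filter fun A => A ∩ X = ∅).Nonempty := by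
    have hpos : (0:ℝ) < ((G.filter fun A => A ∩ X = ∅).card : ℝ) :=
      lt_of_lt_of_le (mul_pos h1c hG0) key
    exact Finset.card_pos.mp (by exact_mod_cast hpos)
  refine ⟨hne, ?_, key⟩
  intro Y
  set G' := G.filter (fun A => A ∩ X = ∅) with hG'def
  rcases Y.eq_empty_or_nonempty with hY | hY
  · subst hY
    simp only [famRestrict_empty', Finset.card_empty, pow_zero, one_mul, le_refl]
  · have hY1 : 1 ≤ Y.card := Finset.card_pos.mpr hY
    set n := Y.card with hn
    have m1 : ((famRestrict G' Y).card : ℝ) ≤ ((famRestrict G Y).card : ℝ) := by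
      exact_mod_cast Finset.card_le_card (famRestrict_mono' (Finset.filter_subset _ _) Y)
    have m2 := hhom Y
    have hpowpos : (0:ℝ) < (1 - c) ^ n := pow_pos h1c n
    have hpowle : (1 - c) ^ n ≤ 1 - c := by
      calc (1 - c) ^ n ≤ (1 - c) ^ 1 := pow_le_pow_of_le_one h1c.le (by linarith) hY1
        _ = 1 - c := pow_one _
    have hG'card : (0:ℝ) ≤ (G'.card : ℝ) := Nat.cast_nonneg _
    have hpow : τ ^ n * (G.card : ℝ) ≤ (τ / (1 - c)) ^ n * (G'.card : ℝ) := by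
      rw [div_pow, div_mul_eq_mul_div, le_div_iff₀ hpowpos]
      calc τ ^ n * (G.card : ℝ) * (1 - c) ^ n ≤ τ ^ n * (G.card : ℝ) * (1 - c) := by
            apply mul_le_mul_of_nonneg_left hpowle (by positivity)
        _ = τ ^ n * ((1 - c) * G.card) := by ring
        _ ≤ τ ^ n * (G'.card : ℝ) := by
            apply mul_le_mul_of_nonneg_left key (by positivity)
    calc ((famRestrict G' Y).card : ℝ) * 𝒜.card ≤ ((famRestrict G Y).card : ℝ) * 𝒜.card :=
          mul_le_mul_of_nonneg_right m1 (Nat.cast_nonneg _)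
      _ ≤ τ ^ n * G.card * (famRestrict 𝒜 Y).card := m2
      _ = (τ ^ n * G.card) * (famRestrict 𝒜 Y).card := by ring
      _ ≤ ((τ / (1 - c)) ^ n * G'.card) * (famRestrict 𝒜 Y).card :=
          mul_le_mul_of_nonneg_right hpow (Nat.cast_nonneg _)
      _ = (τ / (1 - c)) ^ n * G'.card * (famRestrict 𝒜 Y).card := by ring
end

section
/- Let τ ≥ 1 and p ∈ (0,1), and let X ⊆ [n] be a set of size |X| < 1/(τ·p). Suppose a family F ⊆ 2^{[n]} is τ-global with respect to μ_p. Then the family G = F(∅, X) = {F ∈ F : F ∩ X = ∅} is τ̂-global with respect to μ_p for τ̂ = τ/(1 − |X|·p·τ), and μ_p(G) ≥ (1 − |X|·p·τ) · μ_p(F). -/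
open Finset
open scoped Classical

variable {γ : Type*}

/-- The `p`-biased weight of a family `F` on a ground set of size `m`:
`μ_p(F) = Σ_{A ∈ F} p^{|A|} (1-p)^{m-|A|}`. -/
noncomputable def muB (m : ℕ) (p : ℝ) (F : Finset (Finset ℕ)) : ℝ :=
  ∑ A ∈ F, p ^ A.card * (1 - p) ^ (m - A.card)

/-- `F(A, B) = {F \ B : F ∈ F, F ∩ B = A}`. -/
def famRestrict2 (F : Finset (Finset ℕ)) (A B : Finset ℕ) : Finset (Finset ℕ) :=
  (F.filter fun S => S ∩ B = A).image fun S => S \ B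

/-- `F` is `τ`-global with respect to the `p`-biased measure on subsets of the ground
set `W`: for all `A ⊆ B ⊆ W`, `μ_p^{-B}(F(A,B)) ≤ τ^{|B|} μ_p(F)`. -/
noncomputable def IsGlobalOn (W : Finset ℕ) (p τ : ℝ) (F : Finset (Finset ℕ)) : Prop :=
  ∀ A B : Finset ℕ, A ⊆ B → B ⊆ W →
    muB (W.card - B.card) p (famRestrict2 F A B) ≤ τ ^ B.card * muB W.card p F

lemma muB_nonneg {m : ℕ} {p : ℝ} (hp0 : 0 < p) (hp1 : p < 1) (F : Finset (Finset ℕ)) :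
    0 ≤ muB m p F :=
  Finset.sum_nonneg fun A _ => mul_nonneg (pow_nonneg hp0.le _) (pow_nonneg (by linarith) _)

lemma muB_mono {m : ℕ} {p : ℝ} (hp0 : 0 < p) (hp1 : p < 1)
    {G F : Finset (Finset ℕ)} (h : G ⊆ F) : muB m p G ≤ muB m p F :=
  Finset.sum_le_sum_of_subset_of_nonneg h fun A _ _ =>
    mul_nonneg (pow_nonneg hp0.le _) (pow_nonneg (by linarith) _)

lemma muB_single (m : ℕ) (p : ℝ) (x : ℕ) (F : Finset (Finset ℕ)) :
    muB m p (F.filter fun S => x ∈ S) = p * muB (m - 1) p (famRestrict2 F {x} {x}) := by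
  unfold famRestrict2 muB
  have hfe : (F.filter fun S => S ∩ {x} = {x}) = F.filter fun S => x ∈ S := by
    apply Finset.filter_congr
    intro S _
    simp [Finset.inter_eq_right, Finset.singleton_subset_iff]
  rw [Finset.sum_image, hfe, Finset.mul_sum]
  · apply Finset.sum_congr rfl
    intro S hS
    have hxS : x ∈ S := (Finset.mem_filter.mp hS).2
    have hc : 1 ≤ S.card := Finset.card_pos.mpr ⟨x, hxS⟩
    have hcd : (S \ {x}).card = S.card - 1 := by
      rw [Finset.card_sdiff_of_subset (Finset.singleton_subset_iff.mpr hxS), Finset.card_singleton]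
    rw [hcd]
    have h1 : p ^ S.card = p * p ^ (S.card - 1) := by
      rw [← pow_succ']
      congr 1
      omega
    have h2 : m - S.card = (m - 1) - (S.card - 1) := by omega
    rw [h1, h2]
    ring
  · intro S hS T hT h
    rw [hfe] at hS hT
    have hxS : x ∈ S := (Finset.mem_filter.mp hS).2
    have hxT : x ∈ T := (Finset.mem_filter.mp hT).2
    ext a
    by_cases hax : a = x
    · subst hax; simp [hxS, hxT]
    · have := Finset.ext_iff.mp h a
      simp only [Finset.mem_sdiff, Finset.mem_singleton, hax] at this
      simpa using this

/-- Claim 5.17 (globalness after removing elements). -/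
theorem global_removing_intersections (n : ℕ) (τ p : ℝ) (hτ : 1 ≤ τ)
    (hp : p ∈ Set.Ioo (0:ℝ) 1)
    (X : Finset ℕ) (hX : X ⊆ Finset.range n) (hXc : (X.card : ℝ) < 1 / (τ * p))
    (F : Finset (Finset ℕ)) (hF : F ⊆ (Finset.range n).powerset)
    (hglob : IsGlobalOn (Finset.range n) p τ F) :
    IsGlobalOn (Finset.range n) p (τ / (1 - (X.card : ℝ) * p * τ))
        (F.filter fun A => A ∩ X = ∅) ∧
      (1 - (X.card : ℝ) * p * τ) * muB n p F ≤
        muB n p (F.filter fun A => A ∩ X = ∅) := by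
  obtain ⟨hp0, hp1⟩ := hp
  have hτ0 : (0:ℝ) < τ := lt_of_lt_of_le one_pos hτ
  set c : ℝ := (X.card : ℝ) * p * τ with hc
  have hc0 : 0 ≤ c := by positivity
  have hc1 : c < 1 := by
    have hτp : (0:ℝ) < τ * p := mul_pos hτ0 hp0
    rw [lt_div_iff₀ hτp] at hXc
    calc c = (X.card : ℝ) * (τ * p) := by ring
      _ < 1 := hXc
  have h1c : (0:ℝ) < 1 - c := by linarith
  set G := F.filter fun A => A ∩ X = ∅ with hG
  have hμF : 0 ≤ muB n p F := muB_nonneg hp0 hp1 F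
  have hμG : 0 ≤ muB n p G := muB_nonneg hp0 hp1 G
  -- splitting
  have hsplit : muB n p F = muB n p G + muB n p (F.filter fun A => ¬ (A ∩ X = ∅)) := by
    rw [hG]
    unfold muB
    rw [← Finset.sum_filter_add_sum_filter_not F (fun A => A ∩ X = ∅)]
  -- bound on the bad part
  have hx_bound : ∀ x ∈ X, muB n p (F.filter fun S => x ∈ S) ≤ p * τ * muB n p F := by
    intro x hx
    rw [muB_single]
    have hBx : ({x} : Finset ℕ) ⊆ Finset.range n :=
      Finset.singleton_subset_iff.mpr (hX hx)
    have h := hglob {x} {x} subset_rfl hBx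
    simp only [Finset.card_range, Finset.card_singleton, pow_one] at h
    calc p * muB (n - 1) p (famRestrict2 F {x} {x}) ≤ p * (τ * muB n p F) :=
          mul_le_mul_of_nonneg_left h hp0.le
      _ = p * τ * muB n p F := by ring
  have hbad : muB n p (F.filter fun A => ¬ (A ∩ X = ∅)) ≤ c * muB n p F := by
    have step1 : muB n p (F.filter fun A => ¬ (A ∩ X = ∅)) ≤
        ∑ x ∈ X, muB n p (F.filter fun S => x ∈ S) := by
      unfold muB
      have wnn : ∀ S : Finset ℕ, 0 ≤ p ^ S.card * (1 - p) ^ (n - S.card) := fun S =>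
        mul_nonneg (pow_nonneg hp0.le _) (pow_nonneg (by linarith) _)
      calc ∑ S ∈ F.filter fun A => ¬ (A ∩ X = ∅), p ^ S.card * (1 - p) ^ (n - S.card)
          ≤ ∑ S ∈ F.filter fun A => ¬ (A ∩ X = ∅), ∑ x ∈ X,
              if x ∈ S then p ^ S.card * (1 - p) ^ (n - S.card) else 0 := by
            apply Finset.sum_le_sum
            intro S hS
            have hne : (S ∩ X).Nonempty :=
              Finset.nonempty_iff_ne_empty.mpr (Finset.mem_filter.mp hS).2
            obtain ⟨x, hxm⟩ := hne
            have hxS : x ∈ S := (Finset.mem_inter.mp hxm).1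
            have hxX : x ∈ X := (Finset.mem_inter.mp hxm).2
            have := Finset.single_le_sum
              (f := fun y => if y ∈ S then p ^ S.card * (1 - p) ^ (n - S.card) else 0)
              (fun y _ => by by_cases h : y ∈ S <;> simp [h, wnn S]) hxX
            simpa [hxS] using this
        _ = ∑ x ∈ X, ∑ S ∈ F.filter fun A => ¬ (A ∩ X = ∅),
              if x ∈ S then p ^ S.card * (1 - p) ^ (n - S.card) else 0 :=
            Finset.sum_comm
        _ ≤ ∑ x ∈ X, ∑ S ∈ F.filter fun S => x ∈ S,
              p ^ S.card * (1 - p) ^ (n - S.card) := by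
            apply Finset.sum_le_sum
            intro x _
            rw [← Finset.sum_filter]
            apply Finset.sum_le_sum_of_subset_of_nonneg
            · intro S hS
              simp only [Finset.mem_filter] at hS ⊢
              exact ⟨hS.1.1, hS.2⟩
            · intro S _ _; exact wnn S
    calc muB n p (F.filter fun A => ¬ (A ∩ X = ∅))
        ≤ ∑ x ∈ X, muB n p (F.filter fun S => x ∈ S) := step1
      _ ≤ ∑ _x ∈ X, p * τ * muB n p F := Finset.sum_le_sum hx_bound
      _ = (X.card : ℝ) * (p * τ * muB n p F) := by
          rw [Finset.sum_const, nsmul_eq_mul]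
      _ = c * muB n p F := by rw [hc]; ring
  have key : (1 - c) * muB n p F ≤ muB n p G := by nlinarith [hsplit, hbad]
  refine ⟨?_, key⟩
  intro A B hAB hBW
  simp only [Finset.card_range]
  have hsub : famRestrict2 G A B ⊆ famRestrict2 F A B := by
    apply Finset.image_subset_image
    intro S hS
    simp only [hG, Finset.mem_filter] at hS ⊢
    exact ⟨hS.1.1, hS.2⟩
  have h1 : muB (n - B.card) p (famRestrict2 G A B) ≤ τ ^ B.card * muB n p F := by
    refine le_trans (muB_mono hp0 hp1 hsub) ?_
    have := hglob A B hAB hBW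
    simpa [Finset.card_range] using this
  rcases Nat.eq_zero_or_pos B.card with hb | hb
  · have hBe : B = ∅ := Finset.card_eq_zero.mp hb
    subst hBe
    have hAe : A = ∅ := Finset.subset_empty.mp hAB
    subst hAe
    simp only [Finset.card_empty, pow_zero, one_mul, Nat.sub_zero]
    apply muB_mono hp0 hp1
    intro S hS
    unfold famRestrict2 at hS
    simp only [Finset.mem_image, Finset.mem_filter] at hS
    obtain ⟨T, ⟨hT, _⟩, hTS⟩ := hS
    rw [← hTS]
    simpa using hT
  · have hτb : (0:ℝ) ≤ τ ^ B.card := pow_nonneg hτ0.le _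
    have h2 : muB n p F ≤ muB n p G / (1 - c) := by
      rw [le_div_iff₀ h1c]; nlinarith [key]
    have hpow : (1 - c) ^ B.card ≤ 1 - c := by
      calc (1 - c) ^ B.card ≤ (1 - c) ^ 1 :=
            pow_le_pow_of_le_one h1c.le (by linarith) hb
        _ = 1 - c := pow_one _
    have hpowpos : (0:ℝ) < (1 - c) ^ B.card := pow_pos h1c _
    calc muB (n - B.card) p (famRestrict2 G A B)
        ≤ τ ^ B.card * (muB n p G / (1 - c)) :=
          le_trans h1 (mul_le_mul_of_nonneg_left h2 hτb)
      _ ≤ τ ^ B.card * (muB n p G / (1 - c) ^ B.card) := by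
          apply mul_le_mul_of_nonneg_left _ hτb
          exact div_le_div_of_nonneg_left hμG hpowpos hpow
      _ = (τ / (1 - c)) ^ B.card * muB n p G := by
          rw [div_pow]; ring
end
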